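/- arXiv:0909.3288 — 2 statements merged into one kernel-verified Lean document; each statement's English description precedes it below -/
import Mathlib

section
/- Let ℱ be a complete fan of closed convex polyhedral cones in a finite-dimensional real vector space V. Let C₁ and C₂ be convex polyhedral cones, each of which is a union of faces of ℱ, with C₁ ⊆ C₂. If F₁ is a face of ℱ with F₁ ⊆ C₁ and dim F₁ = dim C₁, then there exists a face F₂ of ℱ with F₁ ⊆ F₂ ⊆ C₂ and dim F₂ = dim C₂. -/
open Set
open scoped Pointwise

noncomputable section

namespace ShardPaper

variable {V : Type*} [NormedAddCommGroup V] [InnerProductSpace ℝ V]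

/-- The dimension of a subset of `V`: the rank of its linear span. -/
def setDim (S : Set V) : ℕ :=
  Module.finrank ℝ (Submodule.span ℝ S)

/-- The codimension of a subset of `V`. -/
def setCodim (S : Set V) : ℕ :=
  Module.finrank ℝ V - setDim S

/-- A linear hyperplane in `V`: the zero set of a nonzero linear functional. -/
def IsHyperplane (H : Set V) : Prop :=
  ∃ f : V →ₗ[ℝ] ℝ, f ≠ 0 ∧ H = {x | f x = 0}

/-- A central hyperplane arrangement: a finite set of linear hyperplanes. -/
def IsCentralArrangement (A : Set (Set V)) : Prop :=
  A.Finite ∧ ∀ H ∈ A, IsHyperplane H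

/-- The complement of the union of the hyperplanes of the arrangement. -/
def arrComplement (A : Set (Set V)) : Set V :=
  (⋃₀ A)ᶜ

/-- A region of `A`: the closure of a connected component of the complement of `A`. -/
def IsRegion (A : Set (Set V)) (R : Set V) : Prop :=
  ∃ x ∈ arrComplement A, R = closure (connectedComponentIn (arrComplement A) x)

/-- The set `ℛ` of regions of `A`. -/
def Regions (A : Set (Set V)) : Set (Set V) :=
  {R | IsRegion A R}

/-- The hyperplane `H` separates `R` from `Q`: their interiors lie strictly on
opposite sides of `H`. -/
def Separates (H R Q : Set V) : Prop :=
  ∃ f : V →ₗ[ℝ] ℝ, H = {x | f x = 0} ∧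
    (∀ x ∈ interior R, f x < 0) ∧ (∀ y ∈ interior Q, 0 < f y)

/-- The separating set `S(R)` of a region `R` with respect to the base region `B`. -/
def Sep (A : Set (Set V)) (B R : Set V) : Set (Set V) :=
  {H | H ∈ A ∧ Separates H R B}

/-- The poset of regions: `Q ≤ R` iff `S(Q) ⊆ S(R)`. -/
def regLE (A : Set (Set V)) (B Q R : Set V) : Prop :=
  Q ∈ Regions A ∧ R ∈ Regions A ∧ Sep A B Q ⊆ Sep A B R

/-- Strict order in the poset of regions. -/
def regLT (A : Set (Set V)) (B Q R : Set V) : Prop :=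
  Q ∈ Regions A ∧ R ∈ Regions A ∧ Sep A B Q ⊂ Sep A B R

/-- The cover relation `Q ⋖ R` in the poset of regions. -/
def regCovBy (A : Set (Set V)) (B Q R : Set V) : Prop :=
  regLT A B Q R ∧ ∀ P, regLT A B Q P → regLT A B P R → False

/-- `S` is the join (least upper bound) of the set `X` in the poset of regions. -/
def IsRegJoin (A : Set (Set V)) (B : Set V) (X : Set (Set V)) (S : Set V) : Prop :=
  S ∈ Regions A ∧ (∀ Q ∈ X, regLE A B Q S) ∧
    ∀ P ∈ Regions A, (∀ Q ∈ X, regLE A B Q P) → regLE A B S P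

/-- `S` is the meet (greatest lower bound) of the set `X` in the poset of regions. -/
def IsRegMeet (A : Set (Set V)) (B : Set V) (X : Set (Set V)) (S : Set V) : Prop :=
  S ∈ Regions A ∧ (∀ Q ∈ X, regLE A B S Q) ∧
    ∀ P ∈ Regions A, (∀ Q ∈ X, regLE A B P Q) → regLE A B P S

/-- `X` is an antichain in the poset of regions. -/
def IsRegAntichain (A : Set (Set V)) (B : Set V) (X : Set (Set V)) : Prop :=
  ∀ x ∈ X, ∀ y ∈ X, x ≠ y → ¬ regLE A B x y

/-- The facet-defining hyperplanes of a region `R`. -/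
def FacetHyperplanes (A : Set (Set V)) (R : Set V) : Set (Set V) :=
  {H | H ∈ A ∧ setDim (R ∩ H) + 1 = Module.finrank ℝ V}

/-- A simplicial arrangement: for every region, the normal vectors of its
facet-defining hyperplanes are linearly independent. -/
def Simplicial (A : Set (Set V)) : Prop :=
  ∀ R ∈ Regions A, ∃ ν : FacetHyperplanes A R → V,
    (∀ H : FacetHyperplanes A R, ν H ≠ 0 ∧ ∀ x ∈ H.1, (inner ℝ (ν H) x : ℝ) = 0) ∧
      LinearIndependent ℝ ν

/-- A full subarrangement of `A`: all hyperplanes of `A` containing a given subset of `V`. -/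
def IsFullSub (A A' : Set (Set V)) : Prop :=
  ∃ S : Set V, A' = {H | H ∈ A ∧ S ⊆ H}

/-- `H` is a basic hyperplane of the arrangement `A₀` relative to the base region `B`:
a facet-defining hyperplane of the `A₀`-region containing `B`. -/
def IsBasic (A₀ : Set (Set V)) (B H : Set V) : Prop :=
  ∃ R' ∈ Regions A₀, B ⊆ R' ∧ H ∈ FacetHyperplanes A₀ R'

/-- The rank-two full subarrangement `A(H,H')` of all hyperplanes containing `H ∩ H'`. -/
def pairSub (A : Set (Set V)) (H H' : Set V) : Set (Set V) :=
  {H'' | H'' ∈ A ∧ H ∩ H' ⊆ H''}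

/-- The cutting relation: `H` cuts `H'`. -/
def Cuts (A : Set (Set V)) (B H H' : Set V) : Prop :=
  H ∈ A ∧ H' ∈ A ∧ H ≠ H' ∧
    IsBasic (pairSub A H H') B H ∧ ¬ IsBasic (pairSub A H H') B H'

/-- What remains of `H` after removing the points of hyperplanes cutting `H`. -/
def uncut (A : Set (Set V)) (B H : Set V) : Set V :=
  H \ ⋃₀ {H'' | Cuts A B H'' H}

/-- `Sg` is a shard contained in the hyperplane `H`: the closure of a connected
component of what remains of `H` after cutting. -/
def IsShardIn (A : Set (Set V)) (B H Sg : Set V) : Prop :=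
  H ∈ A ∧ ∃ x ∈ uncut A B H, Sg = closure (connectedComponentIn (uncut A B H) x)

/-- `Sg` is a shard of `(A, B)`. -/
def IsShard (A : Set (Set V)) (B Sg : Set V) : Prop :=
  ∃ H, IsShardIn A B H Sg

/-- `R` is an upper region of the shard `Sg`. -/
def IsUpperRegion (A : Set (Set V)) (B Sg R : Set V) : Prop :=
  R ∈ Regions A ∧ setDim (R ∩ Sg) = setDim Sg ∧
    ∃ H, IsShardIn A B H Sg ∧ H ∈ Sep A B R

/-- `Sg` is a lower shard of the region `R`. -/
def IsLowerShard (A : Set (Set V)) (B Sg R : Set V) : Prop :=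
  IsShard A B Sg ∧ IsUpperRegion A B Sg R

/-- `J = J(Sg)`: the minimal upper region of the shard `Sg`. -/
def IsJ (A : Set (Set V)) (B Sg J : Set V) : Prop :=
  IsUpperRegion A B Sg J ∧ ∀ R, IsUpperRegion A B Sg R → regLE A B J R

/-- The lower hyperplanes of `R`: hyperplanes containing a facet of `R`
separating `R` from a region covered by `R`. -/
def LowerHyps (A : Set (Set V)) (B R : Set V) : Set (Set V) :=
  {H | H ∈ A ∧ ∃ Q, regCovBy A B Q R ∧
    setDim (Q ∩ R) + 1 = Module.finrank ℝ V ∧ Q ∩ R ⊆ H}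

/-- The standard subarrangement `A_K`. -/
def stdSub (A : Set (Set V)) (K : Set (Set V)) : Set (Set V) :=
  {H | H ∈ A ∧ ⋂₀ K ⊆ H}

/-- `Ψ`: the set of all intersections of shards (with `V` as the empty intersection). -/
def ShardInts (A : Set (Set V)) (B : Set V) : Set (Set V) :=
  {Γ | ∃ 𝒮 : Set (Set V), (∀ Sg ∈ 𝒮, IsShard A B Sg) ∧ Γ = ⋂₀ 𝒮}

/-- The map `ψ`: the intersection of the lower shards of `R`. -/
def psiMap (A : Set (Set V)) (B R : Set V) : Set V :=
  ⋂₀ {Sg | IsLowerShard A B Sg R}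

/-- The shard intersection order: `Q ⪯ R` iff `ψ(Q) ⊇ ψ(R)`. -/
def shardLE (A : Set (Set V)) (B Q R : Set V) : Prop :=
  Q ∈ Regions A ∧ R ∈ Regions A ∧ psiMap A B R ⊆ psiMap A B Q

/-- Strict shard intersection order. -/
def shardLT (A : Set (Set V)) (B Q R : Set V) : Prop :=
  Q ∈ Regions A ∧ R ∈ Regions A ∧ psiMap A B R ⊂ psiMap A B Q

/-- The cover relation in the shard intersection order. -/
def shardCovBy (A : Set (Set V)) (B Q R : Set V) : Prop :=
  shardLT A B Q R ∧ ∀ P, shardLT A B Q P → shardLT A B P R → False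

/-- `S` is the join of `X` in the shard intersection order. -/
def IsShardJoin (A : Set (Set V)) (B : Set V) (X : Set (Set V)) (S : Set V) : Prop :=
  S ∈ Regions A ∧ (∀ Q ∈ X, shardLE A B Q S) ∧
    ∀ P ∈ Regions A, (∀ Q ∈ X, shardLE A B Q P) → shardLE A B S P

/-- `S` is the meet of `X` in the shard intersection order. -/
def IsShardMeet (A : Set (Set V)) (B : Set V) (X : Set (Set V)) (S : Set V) : Prop :=
  S ∈ Regions A ∧ (∀ Q ∈ X, shardLE A B S Q) ∧
    ∀ P ∈ Regions A, (∀ Q ∈ X, shardLE A B P Q) → shardLE A B P S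

/-- A face of a convex set: a nonempty extreme subset. -/
def IsFaceOf (C F : Set V) : Prop :=
  IsExtreme ℝ C F ∧ F.Nonempty

/-- A convex polyhedral cone: determined by a finite system of linear inequalities. -/
def IsPolyhedralCone (C : Set V) : Prop :=
  ∃ s : Finset (V →ₗ[ℝ] ℝ), C = {x | ∀ f ∈ s, f x ≤ 0}

/-- A fan: a finite collection of closed convex polyhedral cones, closed under
faces, in which any two cones intersect in a common face. -/
def IsFan (Fn : Set (Set V)) : Prop :=
  Fn.Finite ∧ (∀ C ∈ Fn, IsPolyhedralCone C) ∧
    (∀ C ∈ Fn, ∀ D, IsFaceOf C D → D ∈ Fn) ∧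
    ∀ C ∈ Fn, ∀ D ∈ Fn, IsFaceOf C (C ∩ D) ∧ IsFaceOf D (C ∩ D)

/-- A complete fan: the cones cover `V`. -/
def IsCompleteFan (Fn : Set (Set V)) : Prop :=
  IsFan Fn ∧ ⋃₀ Fn = univ

/-- The fan `ℱ(A)` of all regions of `A` together with their faces. -/
def arrFan (A : Set (Set V)) : Set (Set V) :=
  {F | ∃ R ∈ Regions A, IsFaceOf R F}

/-- A lattice congruence on the poset of regions: an equivalence relation on the
regions compatible with joins and meets. -/
def IsLatCong (A : Set (Set V)) (B : Set V) (Θ : Set V → Set V → Prop) : Prop :=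
  (∀ R ∈ Regions A, Θ R R) ∧
  (∀ Q R, Θ Q R → Q ∈ Regions A ∧ R ∈ Regions A) ∧
  (∀ Q R, Θ Q R → Θ R Q) ∧
  (∀ P Q R, Θ P Q → Θ Q R → Θ P R) ∧
  (∀ x₁ x₂ y₁ y₂ j₁ j₂, Θ x₁ x₂ → Θ y₁ y₂ →
    IsRegJoin A B {x₁, y₁} j₁ → IsRegJoin A B {x₂, y₂} j₂ → Θ j₁ j₂) ∧
  (∀ x₁ x₂ y₁ y₂ m₁ m₂, Θ x₁ x₂ → Θ y₁ y₂ →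
    IsRegMeet A B {x₁, y₁} m₁ → IsRegMeet A B {x₂, y₂} m₂ → Θ m₁ m₂)

/-- `R` is the bottom element of its `Θ`-class, i.e. `R ∈ π_↓^Θ(ℛ)`. -/
def IsBotOfClass (A : Set (Set V)) (B : Set V) (Θ : Set V → Set V → Prop) (R : Set V) : Prop :=
  R ∈ Regions A ∧ ∀ Q, Θ Q R → regLE A B R Q

/-- The depth of a hyperplane: the minimal size of the separating set of a region
separated from `B` by `H`. -/
def depth (A : Set (Set V)) (B H : Set V) : ℕ :=
  sInf {n | ∃ R ∈ Regions A, H ∈ Sep A B R ∧ (Sep A B R).ncard = n}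

/-- The canonical joinands of `R`: the regions `J(Σ)` for `Σ` a lower shard of `R`. -/
def canJoinands (A : Set (Set V)) (B R : Set V) : Set (Set V) :=
  {J | ∃ Sg, IsLowerShard A B Sg R ∧ IsJ A B Sg J}

/-- The set `{J(Σ) : Σ a shard with Σ ⊇ Γ}`. -/
def upJoinands (A : Set (Set V)) (B Γ : Set V) : Set (Set V) :=
  {J | ∃ Sg, IsShard A B Sg ∧ Γ ⊆ Sg ∧ IsJ A B Sg J}

/-- The set `I(Q₀, R₀) = {J(Σ(P ⋖ P')) : Q₀ ≤ P ⋖ P' ≤ R₀}`. -/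
def Iset (A : Set (Set V)) (B Q₀ R₀ : Set V) : Set (Set V) :=
  {J | ∃ P P' Sg, regLE A B Q₀ P ∧ regCovBy A B P P' ∧ regLE A B P' R₀ ∧
    IsShard A B Sg ∧ P ∩ P' ⊆ Sg ∧ IsJ A B Sg J}

end ShardPaper

open ShardPaper

/-! Choose a point `x` in the relative interior of `F₁`. For `z ∈ C₂`, the segment from `x`
towards `z` lies in `C₂` by convexity, and its initial piece lies, for arbitrarily short lengths,
in one of the finitely many cones of the fan making up `C₂`; that cone is closed, so it contains
`x` and its span contains `z`. A convex set covered by finitely many subspaces lies in one of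
them, so a single cone `F₂ ⊆ C₂` through `x` spans `C₂`. Finally `F₁ ∩ F₂` is a face of `F₁`
meeting its relative interior, hence equal to `F₁`. -/

section LinesAndSubspaces

variable {𝕜 V : Type*} [Field 𝕜] [AddCommGroup V] [Module 𝕜 V]

theorem Submodule.mem_of_add_smul_mem_of_ne (W : Submodule 𝕜 V) {b v : V} {s t : 𝕜}
    (hst : s ≠ t) (hs : b + s • v ∈ W) (ht : b + t • v ∈ W) : v ∈ W ∧ b ∈ W := by
  have hv : v ∈ W := by
    refine (W.smul_mem_iff (sub_ne_zero.2 hst)).1 ?_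
    convert W.sub_mem hs ht using 1
    module
  refine ⟨hv, ?_⟩
  convert W.sub_mem hs (W.smul_mem s hv) using 1
  abel

theorem Submodule.exists_mem_of_infinite_add_smul_mem {ι : Type*} {s : Finset ι}
    {W : ι → Submodule 𝕜 V} {b v : V} {T : Set 𝕜} (hT : T.Infinite)
    (h : ∀ t ∈ T, b + t • v ∈ ⋃ i ∈ s, (W i : Set V)) : ∃ i ∈ s, v ∈ W i ∧ b ∈ W i := by
  have h' : ∀ t ∈ T, ∃ i ∈ s, b + t • v ∈ W i := fun t ht => by simpa using h t ht
  have : Nonempty ι :=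
    let ⟨t, ht⟩ := hT.nonempty
    let ⟨i, _⟩ := h' t ht
    ⟨i⟩
  choose! f hfs hf using h'
  obtain ⟨t₁, ht₁, t₂, ht₂, hne, hf₁₂⟩ :=
    hT.exists_ne_map_eq_of_mapsTo (f := f) hfs s.finite_toSet
  exact ⟨f t₁, hfs t₁ ht₁, (W (f t₁)).mem_of_add_smul_mem_of_ne hne (hf t₁ ht₁)
    (hf₁₂ ▸ hf t₂ ht₂)⟩

end LinesAndSubspaces

theorem Convex.exists_subset_of_subset_biUnion_submodule {𝕜 V ι : Type*} [Field 𝕜]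
    [LinearOrder 𝕜] [IsStrictOrderedRing 𝕜] [AddCommGroup V] [Module 𝕜 V] {C : Set V}
    (hC : Convex 𝕜 C) (hne : C.Nonempty) (s : Finset ι) (W : ι → Submodule 𝕜 V)
    (hcov : C ⊆ ⋃ i ∈ s, (W i : Set V)) : ∃ i ∈ s, C ⊆ W i := by
  classical
  induction s using Finset.induction_on with
  | empty =>
    obtain ⟨c, hc⟩ := hne
    simpa using hcov hc
  | insert j s _ ih =>
    by_cases hCj : C ⊆ W j
    · exact ⟨j, Finset.mem_insert_self j s, hCj⟩
    obtain ⟨c, hcC, hcj⟩ := not_subset.1 hCj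
    suffices hCs : C ⊆ ⋃ i ∈ s, (W i : Set V) by
      obtain ⟨i, hi, hCi⟩ := ih hCs
      exact ⟨i, Finset.mem_insert_of_mem hi, hCi⟩
    intro b hbC
    by_cases hbj : b ∈ W j
    · -- the segment from `b` to `c` leaves `W j` immediately, so it is covered by the others
      have hseg : ∀ t ∈ Ioc (0 : 𝕜) 1, b + t • (c - b) ∈ ⋃ i ∈ s, (W i : Set V) := by
        intro t ht
        have htC := hC.add_smul_sub_mem hbC hcC (Ioc_subset_Icc_self ht)
        obtain ⟨i, hi, hti⟩ : ∃ i ∈ insert j s, b + t • (c - b) ∈ W i := by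
          simpa using hcov htC
        obtain rfl | hi := Finset.mem_insert.1 hi
        · refine absurd ?_ hcj
          have hcb := ((W i).mem_of_add_smul_mem_of_ne ht.1.ne (by simpa using hbj) hti).1
          simpa using (W i).add_mem hbj hcb
        · exact mem_biUnion hi hti
      obtain ⟨i, hi, -, hbi⟩ := Submodule.exists_mem_of_infinite_add_smul_mem
        (Ioc_infinite zero_lt_one) hseg
      exact mem_biUnion hi hbi
    · obtain ⟨i, hi, hbi⟩ : ∃ i ∈ insert j s, b ∈ W i := by simpa using hcov hbC
      obtain rfl | hi := Finset.mem_insert.1 hi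
      · exact absurd hbi hbj
      · exact mem_biUnion hi hbi

theorem IsExtreme.subset_of_mem_openSegment {𝕜 E : Type*} [Semiring 𝕜] [PartialOrder 𝕜]
    [AddCommMonoid E] [Module 𝕜 E] {A B : Set E} {x : E} (hAB : IsExtreme 𝕜 A B) (hx : x ∈ B)
    (hxA : ∀ y ∈ A, ∃ z ∈ A, x ∈ openSegment 𝕜 y z) : A ⊆ B := fun y hy =>
  let ⟨_, hz, hyz⟩ := hxA y hy
  hAB.left_mem_of_mem_openSegment hy hz hx hyz

theorem mem_openSegment_smul_sub {𝕜 E : Type*} [Field 𝕜] [LinearOrder 𝕜]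
    [IsStrictOrderedRing 𝕜] [AddCommGroup E] [Module 𝕜 E] (x y : E) {ε : 𝕜} (hε : 0 < ε) :
    x ∈ openSegment 𝕜 y ((1 + ε) • x - ε • y) := by
  have h1ε : (0 : 𝕜) < 1 + ε := by linarith
  refine ⟨ε / (1 + ε), 1 / (1 + ε), by positivity, by positivity, by field_simp; ring, ?_⟩
  match_scalars <;> field_simp; ring

namespace ShardPaper

variable {V : Type*} [NormedAddCommGroup V] [InnerProductSpace ℝ V] {C : Set V}

theorem IsPolyhedralCone.convex (hC : IsPolyhedralCone C) : Convex ℝ C := by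
  obtain ⟨s, rfl⟩ := hC
  simp only [ofPred_forall]
  exact convex_iInter₂ fun f _ => convex_halfSpace_le f.isLinear 0

theorem IsPolyhedralCone.mem_of_frequently_add_smul_mem (hC : IsPolyhedralCone C) {x v : V}
    (h : ∃ᶠ t in nhdsWithin (0 : ℝ) (Ioi 0), x + t • v ∈ C) : x ∈ C := by
  obtain ⟨s, rfl⟩ := hC
  intro f hf
  have hclosed : IsClosed {t : ℝ | f x + t * f v ≤ 0} := isClosed_le (by fun_prop) continuous_const
  have hfreq : ∃ᶠ t in nhdsWithin (0 : ℝ) (Ioi 0), f x + t * f v ≤ 0 :=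
    h.mono fun t ht => by simpa using ht f hf
  simpa using hclosed.mem_of_frequently_of_tendsto hfreq
    (tendsto_nhdsWithin_of_tendsto_nhds Filter.tendsto_id)

theorem exists_mem_forall_neg_or_forall_eq_zero {s : Finset (V →ₗ[ℝ] ℝ)}
    (hs : C = {x | ∀ f ∈ s, f x ≤ 0}) :
    ∃ x ∈ C, ∀ f ∈ s, f x < 0 ∨ ∀ y ∈ C, f y = 0 := by
  classical
  have hmem : ∀ y, y ∈ C ↔ ∀ f ∈ s, f y ≤ 0 := fun y => by rw [hs]; rfl
  have hwit : ∀ f : V →ₗ[ℝ] ℝ, ∃ w ∈ C, (∃ y ∈ C, f y < 0) → f w < 0 := by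
    intro f
    by_cases h : ∃ y ∈ C, f y < 0
    · obtain ⟨y, hy, hfy⟩ := h
      exact ⟨y, hy, fun _ => hfy⟩
    · exact ⟨0, (hmem 0).2 fun f _ => by simp, fun h' => absurd h' h⟩
  choose w hwC hw using hwit
  have hle : ∀ f ∈ s, ∀ g, f (w g) ≤ 0 := fun f hf g => (hmem _).1 (hwC g) f hf
  refine ⟨∑ g ∈ s, w g, ?_, fun f hf => ?_⟩
  · refine (hmem _).2 fun f hf => ?_
    rw [map_sum]
    exact Finset.sum_nonpos fun g _ => hle f hf g
  by_cases h : ∃ y ∈ C, f y < 0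
  · left
    rw [map_sum, ← Finset.add_sum_erase _ _ hf]
    exact add_neg_of_neg_of_nonpos (hw f h) (Finset.sum_nonpos fun g _ => hle f hf g)
  · right
    intro y hy
    simp only [not_exists, not_and, not_lt] at h
    exact le_antisymm ((hmem y).1 hy f hf) (h y hy)

theorem IsPolyhedralCone.exists_mem_forall_mem_openSegment (hC : IsPolyhedralCone C) :
    ∃ x ∈ C, ∀ y ∈ C, ∃ z ∈ C, x ∈ openSegment ℝ y z := by
  obtain ⟨s, hs⟩ := hC
  obtain ⟨x, hxC, hx⟩ := exists_mem_forall_neg_or_forall_eq_zero hs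
  refine ⟨x, hxC, fun y hy => ?_⟩
  have hev : ∀ f ∈ s, ∀ᶠ ε in nhdsWithin (0 : ℝ) (Ioi 0), f ((1 + ε) • x - ε • y) ≤ 0 := by
    intro f hf
    simp only [map_sub, map_smul, smul_eq_mul]
    rcases hx f hf with hfx | hf0
    · have hlim : Filter.Tendsto (fun ε : ℝ => (1 + ε) * f x - ε * f y)
          (nhdsWithin 0 (Ioi 0)) (nhds (f x)) := by
        have hcont : Continuous fun ε : ℝ => (1 + ε) * f x - ε * f y := by fun_prop
        exact tendsto_nhdsWithin_of_tendsto_nhds (hcont.tendsto' 0 (f x) (by ring))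
      exact (hlim.eventually_lt_const hfx).mono fun ε h => h.le
    · exact Filter.Eventually.of_forall fun ε => by simp [hf0 x hxC, hf0 y hy]
  obtain ⟨ε, hεC, hε⟩ :=
    (((Finset.eventually_all s).2 hev).and self_mem_nhdsWithin).exists
  exact ⟨(1 + ε) • x - ε • y, hs ▸ hεC, mem_openSegment_smul_sub x y hε⟩

theorem exists_mem_mem_span_of_sUnion {G : Set (Set V)} (hG : G.Finite)
    (hGpoly : ∀ F ∈ G, IsPolyhedralCone F) (hconv : Convex ℝ (⋃₀ G)) {x z : V}
    (hx : x ∈ ⋃₀ G) (hz : z ∈ ⋃₀ G) : ∃ F ∈ G, x ∈ F ∧ z ∈ Submodule.span ℝ F := by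
  have hev : ∀ᶠ t in nhdsWithin (0 : ℝ) (Ioi 0), ∃ F ∈ G, x + t • (z - x) ∈ F := by
    filter_upwards [Ioo_mem_nhdsGT zero_lt_one] with t ht
    exact hconv.add_smul_sub_mem hx hz (Ioo_subset_Icc_self ht)
  obtain ⟨F, hFG, hfreq⟩ := hG.frequently_exists.1 hev.frequently
  have hxF := (hGpoly F hFG).mem_of_frequently_add_smul_mem hfreq
  obtain ⟨t, htF, ht⟩ := (hfreq.and_eventually self_mem_nhdsWithin).exists
  have hzx := ((Submodule.span ℝ F).mem_of_add_smul_mem_of_ne (s := 0) ht.ne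
    (by simpa using Submodule.subset_span hxF) (Submodule.subset_span htF)).1
  refine ⟨F, hFG, hxF, ?_⟩
  simpa using (Submodule.span ℝ F).add_mem (Submodule.subset_span hxF) hzx

end ShardPaper

theorem statement_0_general {V : Type*} [NormedAddCommGroup V] [InnerProductSpace ℝ V]
    (Fn : Set (Set V)) (hFn : IsCompleteFan Fn)
    (C₁ C₂ : Set V) (hC₂ : IsPolyhedralCone C₂)
    (hU₂ : ∃ G ⊆ Fn, C₂ = ⋃₀ G)
    (h12 : C₁ ⊆ C₂)
    (F₁ : Set V) (hF₁ : F₁ ∈ Fn) (hF₁C : F₁ ⊆ C₁) :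
    ∃ F₂ ∈ Fn, F₁ ⊆ F₂ ∧ F₂ ⊆ C₂ ∧ setDim F₂ = setDim C₂ := by
  obtain ⟨⟨hfin, hpoly, -, hpair⟩, -⟩ := hFn
  obtain ⟨G, hGFn, rfl⟩ := hU₂
  obtain ⟨x, hxF₁, hx⟩ := (hpoly F₁ hF₁).exists_mem_forall_mem_openSegment
  have hxC₂ : x ∈ ⋃₀ G := h12 (hF₁C hxF₁)
  have hGfin : G.Finite := hfin.subset hGFn
  have hGx : {F ∈ G | x ∈ F}.Finite := hGfin.subset (sep_subset _ _)
  have hcov : ⋃₀ G ⊆ ⋃ F ∈ hGx.toFinset, (Submodule.span ℝ F : Set V) := fun z hz => by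
    obtain ⟨F, hFG, hxF, hzF⟩ := exists_mem_mem_span_of_sUnion hGfin
      (fun F hF => hpoly F (hGFn hF)) hC₂.convex hxC₂ hz
    exact mem_biUnion (hGx.mem_toFinset.2 ⟨hFG, hxF⟩) hzF
  obtain ⟨F₂, hF₂, hspan⟩ := hC₂.convex.exists_subset_of_subset_biUnion_submodule
    ⟨x, hxC₂⟩ _ _ hcov
  obtain ⟨hF₂G, hxF₂⟩ := hGx.mem_toFinset.1 hF₂
  have hF₂C₂ : F₂ ⊆ ⋃₀ G := subset_sUnion_of_mem hF₂G
  refine ⟨F₂, hGFn hF₂G, fun y hy => ?_, hF₂C₂, ?_⟩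
  · exact ((hpair F₁ hF₁ F₂ (hGFn hF₂G)).1.1.subset_of_mem_openSegment ⟨hxF₁, hxF₂⟩ hx hy).2
  · unfold setDim
    rw [le_antisymm (Submodule.span_mono hF₂C₂) (Submodule.span_le.2 hspan)]

/-- Lemma (tech).  Let `ℱ` be a complete fan of closed convex polyhedral
cones.  Let `C₁ ⊆ C₂` be convex polyhedral cones, each a union of faces of `ℱ`.  If `F₁`
is a face of `ℱ` contained in `C₁` with `dim F₁ = dim C₁`, then there is a face `F₂` of
`ℱ` with `F₁ ⊆ F₂ ⊆ C₂` and `dim F₂ = dim C₂`. -/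
theorem statement_0 {V : Type*} [NormedAddCommGroup V] [InnerProductSpace ℝ V]
    [FiniteDimensional ℝ V]
    (Fn : Set (Set V)) (hFn : IsCompleteFan Fn)
    (C₁ C₂ : Set V) (hC₁ : IsPolyhedralCone C₁) (hC₂ : IsPolyhedralCone C₂)
    (hU₁ : ∃ G ⊆ Fn, C₁ = ⋃₀ G) (hU₂ : ∃ G ⊆ Fn, C₂ = ⋃₀ G)
    (h12 : C₁ ⊆ C₂)
    (F₁ : Set V) (hF₁ : F₁ ∈ Fn) (hF₁C : F₁ ⊆ C₁) (hd₁ : setDim F₁ = setDim C₁) :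
    ∃ F₂ ∈ Fn, F₁ ⊆ F₂ ∧ F₂ ⊆ C₂ ∧ setDim F₂ = setDim C₂ :=
  statement_0_general Fn hFn C₁ C₂ hC₂ hU₂ h12 F₁ hF₁ hF₁C
end
end

section
/- Let Σ be a lower shard of a region R ∈ ℛ (i.e., R is an upper region of Σ). Then J(Σ) is the unique minimal element in (ℛ,≤) among regions Q with Q ≤ R and H(Σ) ∈ S(Q). -/
open Set
open scoped Pointwise

noncomputable section

open ShardPaper

/-!
Choose defining functionals `F K` of the hyperplanes, positive on the base region: regions are
then closures of sign cells, and `S(R)` is the set of hyperplanes on which `R` is negative.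
`J(Σ) ≤ R` is the minimality of `J(Σ)`, and `H(Σ) ∈ S(J(Σ))` because `Σ` spans `H(Σ)`, so that
`H(Σ)` is the only hyperplane containing `Σ`. Given `Q ≤ R` with `H ∈ S(Q)`, take a generic
point `q` with `H ∈ S(q) ⊆ S(Q)` and `S(q)` as small as possible; walking from `q` towards the
base region, the first wall crossed is then `H`, at some point `x`. If a hyperplane `c` cutting
`H` separated `x` from `Σ`, every other hyperplane through `c ∩ H` would be positive at `x`
(one negative at `x` lies in `S(Q) ⊆ S(R)`, while `R` meets `Σ` in full dimension), so `H`
would be basic in `𝒜(c, H)`. Hence a neighbourhood of `x` in `H` lies in `Σ` and in the region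
of `q`, which is therefore an upper region of `Σ` below `Q`, and `J(Σ)` lies below it.
-/

open Filter Topology

namespace ShardPaper

section LinearAlgebra

variable {V : Type*} [AddCommGroup V] [Module ℝ V] {x z : V}

lemma mul_neg_of_ker_inf_le {f g h : V →ₗ[ℝ] ℝ}
    (hfg : LinearMap.ker h ⊓ LinearMap.ker f ≤ LinearMap.ker g)
    (hg : ¬ LinearMap.ker h ≤ LinearMap.ker g) (hx : h x = 0) (hz : h z = 0)
    (hneg : f x * f z < 0) : g x * g z < 0 := by
  have hfx : f x ≠ 0 := fun h0 => by simp [h0] at hneg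
  have hprop : ∀ y, h y = 0 → g y = g x / f x * f y := by
    intro y hy
    have hmem : y - (f y / f x) • x ∈ LinearMap.ker h ⊓ LinearMap.ker f := by
      simp [hy, hx, div_mul_cancel₀ _ hfx]
    have hgy := LinearMap.mem_ker.mp (hfg hmem)
    simp only [map_sub, map_smul, smul_eq_mul, sub_eq_zero] at hgy
    rw [hgy]
    field_simp
  have hgx : g x ≠ 0 := fun h0 => hg fun y hy => by
    simp [hprop y (LinearMap.mem_ker.mp hy), h0]
  have hsq : g x * g z = (g x / f x) ^ 2 * (f x * f z) := by
    rw [hprop z hz]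
    field_simp
  rw [hsq]
  exact mul_neg_of_pos_of_neg (by positivity) hneg

end LinearAlgebra

section SignCell

variable {V ι : Type*} [NormedAddCommGroup V] [NormedSpace ℝ V]
  {s : Set ι} {f : ι → V →ₗ[ℝ] ℝ} {x y : V}

def signCell (s : Set ι) (f : ι → V →ₗ[ℝ] ℝ) (x : V) : Set V :=
  {y | ∀ i ∈ s, 0 < f i x * f i y}

def sepSet (s : Set ι) (f : ι → V →ₗ[ℝ] ℝ) (x : V) : Set ι :=
  {i | i ∈ s ∧ f i x < 0}

lemma convex_signCell (x : V) : Convex ℝ (signCell s f x) := by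
  intro y hy z hz a b ha hb hab i hi
  have key : f i x * f i (a • y + b • z) = a * (f i x * f i y) + b * (f i x * f i z) := by
    simp only [map_add, map_smul, smul_eq_mul]; ring
  rw [key]
  rcases ha.eq_or_lt with rfl | ha
  · simp only [zero_add] at hab; simp [hab, hz i hi]
  · nlinarith [hy i hi, hz i hi]

lemma self_mem_signCell (hx : ∀ i ∈ s, f i x ≠ 0) : x ∈ signCell s f x :=
  fun i hi => mul_self_pos.mpr (hx i hi)

lemma sepSet_eq_of_mem_signCell (hy : y ∈ signCell s f x) : sepSet s f y = sepSet s f x :=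
  Set.ext fun i => and_congr_right fun hi => (neg_iff_neg_of_mul_pos (hy i hi)).symm

lemma signCell_antitone {t : Set ι} (hts : t ⊆ s) : signCell s f x ⊆ signCell t f x :=
  fun _ hy i hi => hy i (hts hi)

lemma pos_of_mem_interior {S : Set V} {g : V →ₗ[ℝ] ℝ} (hg : g ≠ 0) (hS : ∀ y ∈ S, 0 ≤ g y)
    (hy : y ∈ interior S) : 0 < g y := by
  refine (hS y (interior_subset hy)).lt_of_ne fun h0 => ?_
  have hopen :=
    g.isOpenMap_of_finiteDimensional (LinearMap.surjective hg) (interior S) isOpen_interior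
  obtain ⟨ε, hε, hball⟩ := Metric.isOpen_iff.mp hopen (g y) ⟨y, hy, rfl⟩
  obtain ⟨z, hz, hgz⟩ := hball (show -(ε / 2) ∈ Metric.ball (g y) ε by
    rw [← h0, Metric.mem_ball, Real.dist_eq]; rw [abs_of_neg] <;> linarith)
  linarith [hS z (interior_subset hz)]

lemma le_span_of_mem_nhdsWithin {p : Submodule ℝ V} {S : Set V} (hx : x ∈ p)
    (hS : S ∈ 𝓝[p] x) : p ≤ Submodule.span ℝ S := by
  intro v hv
  have hlim : Tendsto (fun t : ℝ => x + t • v) (𝓝[≠] 0) (𝓝[p] x) := by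
    refine tendsto_nhdsWithin_iff.mpr
      ⟨?_, Eventually.of_forall fun t => p.add_mem hx (p.smul_mem t hv)⟩
    refine Tendsto.mono_left ?_ nhdsWithin_le_nhds
    exact (continuous_const.add (continuous_id.smul continuous_const)).tendsto' _ _ (by simp)
  obtain ⟨t, ht, ht0⟩ := ((hlim.eventually hS).and self_mem_nhdsWithin).exists
  have hxS : x ∈ S := mem_of_mem_nhdsWithin hx hS
  have key : v = t⁻¹ • ((x + t • v) - x) := by
    rw [add_sub_cancel_left, smul_smul, inv_mul_cancel₀ ht0, one_smul]
  rw [key]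
  exact Submodule.smul_mem _ _ (Submodule.sub_mem _ (Submodule.subset_span ht)
    (Submodule.subset_span hxS))

variable [FiniteDimensional ℝ V]

lemma isOpen_signCell (hs : s.Finite) (x : V) : IsOpen (signCell s f x) := by
  simp only [signCell, Set.ofPred_forall]
  exact hs.isOpen_biInter fun i _ =>
    isOpen_lt continuous_const (continuous_const.mul (f i).continuous_of_finiteDimensional)

lemma connectedComponentIn_inter_eq {L : Set V} (hL : Convex ℝ L) (hxL : x ∈ L)
    (hx : ∀ i ∈ s, f i x ≠ 0) :
    connectedComponentIn (L ∩ {y | ∀ i ∈ s, f i y ≠ 0}) x = L ∩ signCell s f x := by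
  apply Set.Subset.antisymm
  · intro y hy
    have hsub := connectedComponentIn_subset (L ∩ {y | ∀ i ∈ s, f i y ≠ 0}) x
    refine ⟨(hsub hy).1, fun i hi => ?_⟩
    have hcover : connectedComponentIn (L ∩ {y | ∀ i ∈ s, f i y ≠ 0}) x ⊆
        {v | 0 < f i x * f i v} ∪ {v | f i x * f i v < 0} := fun v hv =>
      (mul_ne_zero (hx i hi) ((hsub hv).2 i hi)).lt_or_gt.symm
    have hopen : ∀ {p : ℝ → Prop}, IsOpen {t : ℝ | p t} → IsOpen {v : V | p (f i x * f i v)} :=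
      fun h => h.preimage (continuous_const.mul (f i).continuous_of_finiteDimensional)
    refine (isPreconnected_connectedComponentIn.subset_left_of_subset_union
      (hopen isOpen_Ioi) (hopen isOpen_Iio) ?_ hcover ⟨x, mem_connectedComponentIn ⟨hxL, hx⟩,
        mul_self_pos.mpr (hx i hi)⟩) hy
    simp only [Set.disjoint_left, Set.mem_ofPred_eq]
    exact fun v h1 h2 => lt_asymm h1 h2
  · exact (hL.inter (convex_signCell x)).isPreconnected.subset_connectedComponentIn
      ⟨hxL, self_mem_signCell hx⟩
      fun y hy => ⟨hy.1, fun i hi h => (hy.2 i hi).ne' (by rw [h, mul_zero])⟩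

lemma closure_signCell_subset (x : V) :
    closure (signCell s f x) ⊆ {y | ∀ i ∈ s, 0 ≤ f i x * f i y} := by
  refine closure_minimal (fun y hy i hi => (hy i hi).le) ?_
  simp only [Set.ofPred_forall]
  exact isClosed_biInter fun i _ =>
    isClosed_le continuous_const (continuous_const.mul (f i).continuous_of_finiteDimensional)

/-- The segment from `y` to `x` enters the open cell immediately. -/
lemma closure_signCell (hx : ∀ i ∈ s, f i x ≠ 0) :
    closure (signCell s f x) = {y | ∀ i ∈ s, 0 ≤ f i x * f i y} := by
  refine (closure_signCell_subset x).antisymm fun y hy => ?_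
  have hseg : ∀ t ∈ Set.Ioo (0 : ℝ) 1, y + t • (x - y) ∈ signCell s f x := by
    intro t ht i hi
    have key : f i x * f i (y + t • (x - y)) =
        (1 - t) * (f i x * f i y) + t * (f i x * f i x) := by
      simp only [map_add, map_smul, map_sub, smul_eq_mul]; ring
    rw [key]
    nlinarith [hy i hi, mul_self_pos.mpr (hx i hi), ht.1, ht.2]
  have hlim : Tendsto (fun t : ℝ => y + t • (x - y)) (𝓝[Set.Ioo 0 1] 0) (𝓝 y) := by
    refine Tendsto.mono_left ?_ nhdsWithin_le_nhds
    exact (continuous_const.add (continuous_id.smul continuous_const)).tendsto' _ _ (by simp)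
  have : (𝓝[Set.Ioo (0 : ℝ) 1] 0).NeBot := left_nhdsWithin_Ioo_neBot zero_lt_one
  exact mem_closure_of_tendsto hlim (eventually_mem_nhdsWithin.mono hseg)

lemma interior_closure_signCell (hs : s.Finite) (hx : ∀ i ∈ s, f i x ≠ 0) :
    interior (closure (signCell s f x)) = signCell s f x := by
  refine Set.Subset.antisymm (fun y hy i hi => ?_)
    (interior_maximal subset_closure (isOpen_signCell hs x))
  refine pos_of_mem_interior (g := f i x • f i) ?_ (fun z hz => ?_) hy
  · exact smul_ne_zero (hx i hi) fun h => hx i hi (by simp [h])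
  · exact closure_signCell_subset x hz i hi

lemma closure_inter_signCell_mem_nhdsWithin (hs : s.Finite) (L : Set V)
    (hy : y ∈ signCell s f x) : closure (L ∩ signCell s f x) ∈ 𝓝[L] y :=
  mem_nhdsWithin.mpr ⟨_, isOpen_signCell hs x, hy, fun _ hz => subset_closure ⟨hz.2, hz.1⟩⟩

lemma closure_signCell_mem_nhdsWithin (hs : s.Finite) (hx : ∀ i ∈ s, f i x ≠ 0) {j : ι}
    (hy : y ∈ signCell (s \ {j}) f x) :
    closure (signCell s f x) ∈ 𝓝[LinearMap.ker (f j)] y := by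
  refine mem_nhdsWithin.mpr ⟨_, isOpen_signCell hs.sdiff x, hy, fun z ⟨hz, hzj⟩ => ?_⟩
  rw [closure_signCell hx]
  intro i hi
  by_cases hij : i = j
  · subst hij
    rw [LinearMap.mem_ker.mp hzj, mul_zero]
  · exact (hz i ⟨hi, hij⟩).le

lemma exists_mem_forall_ne_zero {U : Set V} (hU : IsOpen U) (hne : U.Nonempty)
    {T : Set (V →ₗ[ℝ] ℝ)} (hT : T.Finite) (hT0 : ∀ g ∈ T, g ≠ 0) :
    ∃ q ∈ U, ∀ g ∈ T, g q ≠ 0 := by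
  have hdense : Dense (⋂ g ∈ T, {y : V | g y ≠ 0}) := by
    refine dense_biInter_of_isOpen (fun g _ => ?_) hT.countable fun g hg => ?_
    · exact isOpen_ne_fun g.continuous_of_finiteDimensional continuous_const
    · show Dense (LinearMap.ker g : Set V)ᶜ
      rw [← interior_eq_empty_iff_dense_compl, Set.eq_empty_iff_forall_notMem]
      exact fun y hy => hT0 g hg (LinearMap.ker_eq_top.mp
        ((LinearMap.ker g).eq_top_of_nonempty_interior' ⟨y, hy⟩))
  obtain ⟨q, hq, hqU⟩ := hdense.exists_mem_open hU hne
  exact ⟨q, hqU, by simpa using hq⟩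

end SignCell

section Arrangement

variable {V : Type*} [NormedAddCommGroup V] [InnerProductSpace ℝ V]
  {A A' : Set (Set V)} {F : Set V → V →ₗ[ℝ] ℝ} {b q x z : V} {K H R : Set V}

def IsOrientedNormals (A : Set (Set V)) (F : Set V → V →ₗ[ℝ] ℝ) (b : V) : Prop :=
  ∀ K ∈ A, K = LinearMap.ker (F K) ∧ 0 < F K b

lemma exists_isOrientedNormals (hA : ∀ K ∈ A, IsHyperplane K) (hb : b ∈ arrComplement A) :
    ∃ F, IsOrientedNormals A F b := by
  have hex : ∀ K ∈ A, ∃ g : V →ₗ[ℝ] ℝ, K = LinearMap.ker g ∧ 0 < g b := by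
    intro K hK
    obtain ⟨g, -, rfl⟩ := hA K hK
    have hgb : g b ≠ 0 := fun h => hb (Set.mem_sUnion_of_mem h hK)
    rcases hgb.lt_or_gt with hneg | hpos
    · exact ⟨-g, by ext; simp, by simpa using hneg⟩
    · exact ⟨g, by ext; simp, hpos⟩
  choose! F hF using hex
  exact ⟨F, hF⟩

lemma IsOrientedNormals.mono (hF : IsOrientedNormals A F b) (h : A' ⊆ A) :
    IsOrientedNormals A' F b :=
  fun K hK => hF K (h hK)

lemma IsOrientedNormals.mem_iff (hF : IsOrientedNormals A F b) (hK : K ∈ A) :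
    x ∈ K ↔ F K x = 0 :=
  (Set.ext_iff.mp (hF K hK).1 x).trans LinearMap.mem_ker

lemma IsOrientedNormals.ne_zero (hF : IsOrientedNormals A F b) (hK : K ∈ A) : F K ≠ 0 :=
  fun h => (hF K hK).2.ne' (by simp [h])

lemma IsOrientedNormals.eq_of_ker_le (hF : IsOrientedNormals A F b) (hK : K ∈ A) (hH : H ∈ A)
    (h : LinearMap.ker (F K) ≤ LinearMap.ker (F H)) : K = H := by
  have hcoatom := LinearMap.isCoatom_ker_of_surjective (LinearMap.surjective (hF.ne_zero hK))
  have hker := (hcoatom.le_iff_eq fun h => hF.ne_zero hH (LinearMap.ker_eq_top.mp h)).mp h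
  rw [(hF K hK).1, (hF H hH).1, hker]

lemma IsOrientedNormals.arrComplement_eq (hF : IsOrientedNormals A F b) :
    arrComplement A = {y | ∀ K ∈ A, F K y ≠ 0} := by
  ext y
  simp only [arrComplement, Set.mem_compl_iff, Set.mem_sUnion, not_exists, not_and,
    Set.mem_ofPred_eq]
  exact forall₂_congr fun K hK => not_congr (hF.mem_iff hK)

variable [FiniteDimensional ℝ V]

lemma IsOrientedNormals.connectedComponentIn_eq (hF : IsOrientedNormals A F b)
    (hq : ∀ K ∈ A, F K q ≠ 0) : connectedComponentIn (arrComplement A) q = signCell A F q := by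
  simpa [hF.arrComplement_eq] using connectedComponentIn_inter_eq convex_univ (Set.mem_univ q) hq

lemma IsOrientedNormals.mem_regions_iff (hF : IsOrientedNormals A F b) :
    R ∈ Regions A ↔ ∃ q, (∀ K ∈ A, F K q ≠ 0) ∧ R = closure (signCell A F q) := by
  constructor
  · rintro ⟨q, hq, rfl⟩
    rw [hF.arrComplement_eq] at hq
    exact ⟨q, hq, by rw [hF.connectedComponentIn_eq hq]⟩
  · rintro ⟨q, hq, rfl⟩
    exact ⟨q, hF.arrComplement_eq ▸ hq, by rw [hF.connectedComponentIn_eq hq]⟩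

lemma IsOrientedNormals.sep_eq (hF : IsOrientedNormals A F b) (hA : A.Finite)
    (hq : ∀ K ∈ A, F K q ≠ 0) :
    Sep A (closure (signCell A F b)) (closure (signCell A F q)) = sepSet A F q := by
  have hb : ∀ K ∈ A, F K b ≠ 0 := fun K hK => (hF K hK).2.ne'
  ext K
  simp only [Sep, sepSet, Separates, interior_closure_signCell hA hq,
    interior_closure_signCell hA hb, Set.mem_ofPred_eq]
  refine and_congr_right fun hK => ⟨?_, fun hKq => ⟨F K, (hF K hK).1, ?_, ?_⟩⟩
  · rintro ⟨g, hgK, hneg, hpos⟩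
    have hgq := hneg q (self_mem_signCell hq)
    have hgb := hpos b (self_mem_signCell hb)
    -- the point of the segment `[q, b]` where `g` vanishes lies on `K`
    have hzK : g b • q - g q • b ∈ K := by
      rw [hgK]; simp only [Set.mem_ofPred_eq, map_sub, map_smul, smul_eq_mul]; ring
    rw [hF.mem_iff hK] at hzK
    simp only [map_sub, map_smul, smul_eq_mul] at hzK
    nlinarith [(hF K hK).2]
  · exact fun y hy => neg_of_mul_pos_right (hy K hK) hKq.le
  · exact fun y hy => pos_of_mul_pos_right (hy K hK) (hF K hK).2.le

lemma IsOrientedNormals.nonpos_of_mem_sep (hF : IsOrientedNormals A F b) (hA : A.Finite)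
    (hR : R ∈ Regions A) (hK : K ∈ Sep A (closure (signCell A F b)) R) (hz : z ∈ R) :
    F K z ≤ 0 := by
  obtain ⟨q, hq, rfl⟩ := hF.mem_regions_iff.mp hR
  rw [hF.sep_eq hA hq] at hK
  exact nonpos_of_mul_nonneg_right (closure_signCell_subset q hz K hK.1) hK.2

end Arrangement

section Shard

variable {V : Type*} [NormedAddCommGroup V] [InnerProductSpace ℝ V]
  {A : Set (Set V)} {F : Set V → V →ₗ[ℝ] ℝ} {B : Set V} {b : V} {H H' Sg P : Set V}

lemma IsOrientedNormals.uncut_eq (hF : IsOrientedNormals A F b) :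
    uncut A B H = H ∩ {y | ∀ c ∈ {c | Cuts A B c H}, F c y ≠ 0} := by
  ext y
  simp only [uncut, Set.mem_sdiff, Set.mem_sUnion, not_exists, not_and, Set.mem_inter_iff,
    Set.mem_ofPred_eq]
  exact and_congr_right fun _ => forall₂_congr fun c hc => not_congr (hF.mem_iff hc.1)

variable [FiniteDimensional ℝ V]

lemma IsOrientedNormals.exists_eq_of_isShardIn (hF : IsOrientedNormals A F b)
    (h : IsShardIn A B H Sg) :
    ∃ x₀ ∈ H, (∀ c ∈ {c | Cuts A B c H}, F c x₀ ≠ 0) ∧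
      Sg = closure (H ∩ signCell {c | Cuts A B c H} F x₀) := by
  obtain ⟨hH, x₀, hx₀, rfl⟩ := h
  have hconv : Convex ℝ H := (hF H hH).1 ▸ (LinearMap.ker (F H)).convex
  rw [hF.uncut_eq] at hx₀ ⊢
  exact ⟨x₀, hx₀.1, hx₀.2, by rw [connectedComponentIn_inter_eq hconv hx₀.1 hx₀.2]⟩

lemma IsOrientedNormals.subset_of_isShardIn (hF : IsOrientedNormals A F b)
    (h : IsShardIn A B H Sg) : Sg ⊆ H := by
  obtain ⟨x₀, -, -, rfl⟩ := hF.exists_eq_of_isShardIn h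
  have hclosed : IsClosed H := (hF H h.1).1 ▸ (LinearMap.ker (F H)).closed_of_finiteDimensional
  exact closure_minimal Set.inter_subset_left hclosed

lemma IsOrientedNormals.span_eq_of_isShardIn (hF : IsOrientedNormals A F b) (hA : A.Finite)
    (h : IsShardIn A B H Sg) : Submodule.span ℝ Sg = LinearMap.ker (F H) := by
  have hsub := hF.subset_of_isShardIn h
  obtain ⟨x₀, hx₀H, hx₀, hSg⟩ := hF.exists_eq_of_isShardIn h
  rw [(hF H h.1).1] at hsub hx₀H
  refine le_antisymm (Submodule.span_le.mpr hsub) (le_span_of_mem_nhdsWithin hx₀H ?_)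
  rw [hSg, ← (hF H h.1).1]
  exact closure_inter_signCell_mem_nhdsWithin (hA.subset fun c hc => hc.1) H
    (self_mem_signCell hx₀)

lemma IsOrientedNormals.eq_of_isShardIn (hF : IsOrientedNormals A F b) (hA : A.Finite)
    (h : IsShardIn A B H Sg) (h' : IsShardIn A B H' Sg) : H = H' := by
  refine hF.eq_of_ker_le h.1 h'.1 ?_
  rw [← hF.span_eq_of_isShardIn hA h, Submodule.span_le, ← (hF H' h'.1).1]
  exact hF.subset_of_isShardIn h'

lemma IsOrientedNormals.mem_sep_of_isUpperRegion (hF : IsOrientedNormals A F b) (hA : A.Finite)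
    (hP : IsUpperRegion A B Sg P) (hH : IsShardIn A B H Sg) : H ∈ Sep A B P := by
  obtain ⟨-, -, H', hH', hsep⟩ := hP
  rwa [hF.eq_of_isShardIn hA hH hH']

end Shard

section Cut

variable {V : Type*} [NormedAddCommGroup V] [InnerProductSpace ℝ V] [FiniteDimensional ℝ V]
  {A : Set (Set V)} {F : Set V → V →ₗ[ℝ] ℝ} {B : Set V} {b x z : V} {c H R : Set V}

lemma IsOrientedNormals.isBasic (hF : IsOrientedNormals A F b) (hA : A.Finite) (hH : H ∈ A)
    (hx : x ∈ H) (hpos : ∀ K ∈ A, K ≠ H → 0 < F K x) (hB : B ⊆ closure (signCell A F b)) :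
    IsBasic A B H := by
  have hb : ∀ K ∈ A, F K b ≠ 0 := fun K hK => (hF K hK).2.ne'
  refine ⟨closure (signCell A F b), hF.mem_regions_iff.mpr ⟨b, hb, rfl⟩, hB, hH, ?_⟩
  have hxker : x ∈ LinearMap.ker (F H) := (hF.mem_iff hH).mp hx
  have hnhds : closure (signCell A F b) ∩ H ∈ 𝓝[LinearMap.ker (F H)] x :=
    Filter.inter_mem (closure_signCell_mem_nhdsWithin hA hb
        fun K hK => mul_pos (hF K hK.1).2 (hpos K hK.1 hK.2))
      (mem_of_superset self_mem_nhdsWithin (hF H hH).1.symm.subset)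
  have hspan : Submodule.span ℝ (closure (signCell A F b) ∩ H) = LinearMap.ker (F H) :=
    le_antisymm (Submodule.span_le.mpr (Set.inter_subset_right.trans (hF H hH).1.subset))
      (le_span_of_mem_nhdsWithin hxker hnhds)
  rw [setDim, hspan, Module.Dual.finrank_ker_add_one_of_ne_zero (hF.ne_zero hH)]

/-- Otherwise every hyperplane of `𝒜(c, H)` other than `H` would separate `x` from `z` inside
`H`; by `hsep` none of them is negative at `x`, so `x` would show that `H` is basic in
`𝒜(c, H)`. -/
lemma IsOrientedNormals.nonneg_mul_of_cuts (hF : IsOrientedNormals A F b) (hA : A.Finite)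
    (hR : R ∈ Regions A) (hc : Cuts A (closure (signCell A F b)) c H) (hx : x ∈ H)
    (hz : z ∈ R ∩ H) (hxK : ∀ K ∈ A, K ≠ H → F K x ≠ 0)
    (hsep : ∀ K ∈ A, F K x < 0 → K ∈ Sep A (closure (signCell A F b)) R) :
    0 ≤ F c x * F c z := by
  obtain ⟨hcA, hHA, -, -, hnot⟩ := hc
  by_contra! hneg
  refine hnot ((hF.mono fun K hK => hK.1).isBasic (hA.subset fun K hK => hK.1)
    ⟨hHA, Set.inter_subset_right⟩ hx (fun K hK hKH => ?_)
    (closure_mono (signCell_antitone fun K hK => hK.1)))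
  have hKxz : F K x * F K z < 0 := by
    refine mul_neg_of_ker_inf_le (h := F H) (fun y hy => ?_)
      (fun hle => hKH (hF.eq_of_ker_le hHA hK.1 hle).symm)
      ((hF.mem_iff hHA).mp hx) ((hF.mem_iff hHA).mp hz.2) hneg
    exact (hF.mem_iff hK.1).mp (hK.2 ⟨(hF.mem_iff hcA).mpr hy.2, (hF.mem_iff hHA).mpr hy.1⟩)
  refine (hxK K hK.1 hKH).lt_or_gt.resolve_left fun hKx => ?_
  nlinarith [hF.nonpos_of_mem_sep hA hR (hsep K hK.1 hKx) hz.1]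

end Cut

section Wall

variable {V ι : Type*} [NormedAddCommGroup V] [NormedSpace ℝ V]
  {s : Set ι} {f : ι → V →ₗ[ℝ] ℝ} {b q x : V} {w : ι}

/-- Along the ray `q + t • b` the wall `i` is met at time `-f i q / f i b`; the first wall met
is unique because `q` is generic. -/
lemma exists_first_wall (hs : s.Finite) (hb : ∀ i ∈ s, 0 < f i b) (hq : ∀ i ∈ s, f i q ≠ 0)
    (hgen : ∀ i ∈ s, ∀ j ∈ s, i ≠ j → f i q * f j b ≠ f j q * f i b)
    (hne : (sepSet s f q).Nonempty) :
    ∃ w ∈ sepSet s f q, ∃ x, f w x = 0 ∧ x ∈ signCell (s \ {w}) f q := by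
  set time : ι → ℝ := fun i => -f i q / f i b
  obtain ⟨w, hw, hmin⟩ := Set.exists_min_image _ time (hs.subset fun i hi => hi.1) hne
  have hval : ∀ i ∈ s, f i (q + time w • b) = f i b * (time w - time i) := by
    intro i hi
    simp only [time, map_add, map_smul, smul_eq_mul]
    field_simp [(hb i hi).ne']
    ring
  refine ⟨w, hw, q + time w • b, by rw [hval w hw.1, sub_self, mul_zero], ?_⟩
  rintro i ⟨hi, hiw⟩
  rw [hval i hi]
  have htw : 0 < time w := div_pos (neg_pos.mpr hw.2) (hb w hw.1)
  rcases (hq i hi).lt_or_gt with hiq | hiq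
  · have hlt : time w < time i := (hmin i ⟨hi, hiq⟩).lt_of_ne fun heq => by
      refine hgen w hw.1 i hi (Ne.symm hiw) ?_
      simp only [time] at heq
      field_simp [(hb i hi).ne', (hb w hw.1).ne'] at heq
      linarith
    exact mul_pos_of_neg_of_neg hiq (mul_neg_of_pos_of_neg (hb i hi) (by linarith))
  · have hti : time i < 0 := div_neg_of_neg_of_pos (neg_neg_of_pos hiq) (hb i hi)
    exact mul_pos hiq (mul_pos (hb i hi) (by linarith))

variable [FiniteDimensional ℝ V]

lemma exists_beyond_wall (hs : s.Finite) (hw : w ∈ sepSet s f q) (hwx : f w x = 0)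
    (hx : x ∈ signCell (s \ {w}) f q) :
    ∃ y, (∀ i ∈ s, f i y ≠ 0) ∧ sepSet s f y = sepSet s f q \ {w} := by
  have hlim : Tendsto (fun t : ℝ => x + t • (x - q)) (𝓝[>] 0) (𝓝 x) := by
    refine Tendsto.mono_left ?_ nhdsWithin_le_nhds
    exact (continuous_const.add (continuous_id.smul continuous_const)).tendsto' _ _ (by simp)
  obtain ⟨t, hty, ht⟩ := ((hlim.eventually ((isOpen_signCell hs.sdiff q).mem_nhds hx)).and
    self_mem_nhdsWithin).exists
  have hwy : 0 < f w (x + t • (x - q)) := by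
    simp only [map_add, map_smul, map_sub, smul_eq_mul, hwx]
    nlinarith [hw.2, show (0 : ℝ) < t from ht]
  refine ⟨x + t • (x - q), fun i hi => ?_, Set.ext fun i => ?_⟩
  · by_cases hiw : i = w
    · exact hiw ▸ hwy.ne'
    · exact right_ne_zero_of_mul (hty i ⟨hi, hiw⟩).ne'
  · by_cases hiw : i = w
    · subst hiw
      simp only [sepSet, Set.mem_sdiff, Set.mem_singleton_iff, not_true_eq_false, and_false,
        iff_false, Set.mem_ofPred_eq, not_and, not_lt]
      exact fun _ => hwy.le
    · simp only [sepSet, Set.mem_sdiff, Set.mem_singleton_iff, hiw, not_false_eq_true, and_true,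
        Set.mem_ofPred_eq]
      exact and_congr_right fun hi => (neg_iff_neg_of_mul_pos (hty i ⟨hi, hiw⟩)).symm

end Wall

section Main

variable {V : Type*} [NormedAddCommGroup V] [InnerProductSpace ℝ V] [FiniteDimensional ℝ V]
  {A : Set (Set V)} {F : Set V → V →ₗ[ℝ] ℝ} {B : Set V} {b p x : V} {H R Q Sg : Set V}

lemma IsOrientedNormals.exists_generic_mem_signCell (hF : IsOrientedNormals A F b)
    (hA : A.Finite) (hp : ∀ K ∈ A, F K p ≠ 0) :
    ∃ q ∈ signCell A F p, ∀ K ∈ A, ∀ K' ∈ A, K ≠ K' → F K q * F K' b ≠ F K' q * F K b := by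
  set T := (fun P : Set V × Set V => F P.2 b • F P.1 - F P.1 b • F P.2) ''
    {P | P.1 ∈ A ∧ P.2 ∈ A ∧ P.1 ≠ P.2}
  have hT : T.Finite := ((hA.prod hA).subset fun P hP => ⟨hP.1, hP.2.1⟩).image _
  have hT0 : ∀ g ∈ T, g ≠ 0 := by
    rintro _ ⟨⟨K, K'⟩, ⟨hK, hK', hne⟩, rfl⟩ h0
    refine hne (hF.eq_of_ker_le hK hK' (le_of_eq ?_))
    rw [sub_eq_zero] at h0
    rw [← LinearMap.ker_smul _ _ (hF K' hK').2.ne', h0, LinearMap.ker_smul _ _ (hF K hK).2.ne']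
  obtain ⟨q, hq, hqT⟩ :=
    exists_mem_forall_ne_zero (isOpen_signCell hA p) ⟨p, self_mem_signCell hp⟩ hT hT0
  refine ⟨q, hq, fun K hK K' hK' hne heq => hqT _ ⟨(K, K'), ⟨hK, hK', hne⟩, rfl⟩ ?_⟩
  simp only [LinearMap.sub_apply, LinearMap.smul_apply, smul_eq_mul]
  linarith

/-- A point with fewest separating hyperplanes among those with `H ∈ sepSet ⊆ 𝒮` meets `H`
first on its way to `b`: crossing an earlier wall would give a point with fewer. -/
lemma IsOrientedNormals.exists_wall_point (hF : IsOrientedNormals A F b) (hA : A.Finite)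
    {𝒮 : Set (Set V)} (hp : ∀ K ∈ A, F K p ≠ 0) (hHp : H ∈ sepSet A F p)
    (hp𝒮 : sepSet A F p ⊆ 𝒮) :
    ∃ q x, (∀ K ∈ A, F K q ≠ 0) ∧ H ∈ sepSet A F q ∧ sepSet A F q ⊆ 𝒮 ∧
      F H x = 0 ∧ x ∈ signCell (A \ {H}) F q := by
  obtain ⟨p₀, ⟨hp₀, hHp₀, hp₀𝒮⟩, hmin⟩ := (measure fun p => (sepSet A F p).ncard).wf.has_min
    {p | (∀ K ∈ A, F K p ≠ 0) ∧ H ∈ sepSet A F p ∧ sepSet A F p ⊆ 𝒮} ⟨p, hp, hHp, hp𝒮⟩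
  obtain ⟨q, hqp, hgen⟩ := hF.exists_generic_mem_signCell hA hp₀
  have hq : ∀ K ∈ A, F K q ≠ 0 := fun K hK => right_ne_zero_of_mul (hqp K hK).ne'
  have hsep := sepSet_eq_of_mem_signCell hqp
  obtain ⟨W, hW, x, hWx, hx⟩ :=
    exists_first_wall hA (fun K hK => (hF K hK).2) hq hgen ⟨H, hsep ▸ hHp₀⟩
  obtain rfl : W = H := by
    by_contra hWH
    obtain ⟨y, hy, hsepy⟩ := exists_beyond_wall hA hW hWx hx
    refine hmin y ⟨hy, ?_, ?_⟩ ?_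
    · rw [hsepy, hsep]
      exact ⟨hHp₀, fun h => hWH (Set.mem_singleton_iff.mp h).symm⟩
    · rw [hsepy, hsep]
      exact Set.sdiff_subset.trans hp₀𝒮
    · show (sepSet A F y).ncard < (sepSet A F p₀).ncard
      rw [hsepy, ← hsep]
      exact Set.ncard_sdiff_singleton_lt_of_mem hW (hA.subset fun K hK => hK.1)
  exact ⟨q, x, hq, hsep ▸ hHp₀, hsep ▸ hp₀𝒮, hWx, hx⟩

lemma IsOrientedNormals.shard_mem_nhdsWithin (hF : IsOrientedNormals A F b) (hA : A.Finite)
    (hR : IsUpperRegion A (closure (signCell A F b)) Sg R)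
    (hH : IsShardIn A (closure (signCell A F b)) H Sg) (hx : x ∈ H)
    (hxK : ∀ K ∈ A, K ≠ H → F K x ≠ 0)
    (hsep : ∀ K ∈ A, F K x < 0 → K ∈ Sep A (closure (signCell A F b)) R) :
    Sg ∈ 𝓝[LinearMap.ker (F H)] x := by
  obtain ⟨x₀, -, hx₀, hSg⟩ := hF.exists_eq_of_isShardIn hH
  suffices hcut : x ∈ signCell {c | Cuts A (closure (signCell A F b)) c H} F x₀ by
    rw [hSg, ← (hF H hH.1).1]
    exact closure_inter_signCell_mem_nhdsWithin (hA.subset fun c hc => hc.1) H hcut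
  intro c hc
  have hspan : Submodule.span ℝ (R ∩ Sg) = LinearMap.ker (F H) := by
    rw [← hF.span_eq_of_isShardIn hA hH]
    exact Submodule.eq_of_le_of_finrank_eq (Submodule.span_mono Set.inter_subset_right) hR.2.1
  obtain ⟨z, hz, hcz⟩ : ∃ z ∈ R ∩ Sg, F c z ≠ 0 := by
    by_contra! h
    refine hc.2.2.1 (hF.eq_of_ker_le hH.1 hc.1 ?_).symm
    rw [← hspan, Submodule.span_le]
    exact h
  have hx₀z : 0 < F c x₀ * F c z := by
    have hzcl : z ∈ closure (signCell {c | Cuts A (closure (signCell A F b)) c H} F x₀) :=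
      closure_mono Set.inter_subset_right (hSg ▸ hz.2)
    exact (closure_signCell_subset x₀ hzcl c hc).lt_of_ne (mul_ne_zero (hx₀ c hc) hcz).symm
  have hxz : 0 < F c x * F c z :=
    (hF.nonneg_mul_of_cuts hA hR.1 hc hx ⟨hz.1, hF.subset_of_isShardIn hH hz.2⟩ hxK
      hsep).lt_of_ne (mul_ne_zero (hxK c hc.1 hc.2.2.1) hcz).symm
  have hsq : F c x₀ * F c x * F c z ^ 2 = (F c x₀ * F c z) * (F c x * F c z) := by ring
  exact pos_of_mul_pos_left (hsq ▸ mul_pos hx₀z hxz) (sq_nonneg _)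

lemma IsOrientedNormals.exists_isUpperRegion_sep_subset (hF : IsOrientedNormals A F b)
    (hA : A.Finite) (hB : B = closure (signCell A F b)) (hR : IsUpperRegion A B Sg R)
    (hH : IsShardIn A B H Sg) (hQR : regLE A B Q R) (hHQ : H ∈ Sep A B Q) :
    ∃ Q₀, IsUpperRegion A B Sg Q₀ ∧ Sep A B Q₀ ⊆ Sep A B Q := by
  subst hB
  obtain ⟨p, hp, rfl⟩ := hF.mem_regions_iff.mp hQR.1
  rw [hF.sep_eq hA hp] at hHQ ⊢
  obtain ⟨q, x, hq, hHq, hqp, hHx, hx⟩ := hF.exists_wall_point hA hp hHQ subset_rfl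
  have hxK : ∀ K ∈ A, K ≠ H → F K x ≠ 0 := fun K hK hKH =>
    right_ne_zero_of_mul (hx K ⟨hK, hKH⟩).ne'
  have hsepR : ∀ K ∈ A, F K x < 0 → K ∈ Sep A (closure (signCell A F b)) R := by
    intro K hK hKx
    have hKH : K ≠ H := by rintro rfl; exact hKx.ne hHx
    refine hQR.2.2 ?_
    rw [hF.sep_eq hA hp]
    exact hqp ⟨hK, (neg_iff_neg_of_mul_pos (hx K ⟨hK, hKH⟩)).mpr hKx⟩
  have hnhds : closure (signCell A F q) ∩ Sg ∈ 𝓝[LinearMap.ker (F H)] x :=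
    Filter.inter_mem (closure_signCell_mem_nhdsWithin hA hq hx)
      (hF.shard_mem_nhdsWithin hA hR hH ((hF.mem_iff hH.1).mpr hHx) hxK hsepR)
  have hspan : Submodule.span ℝ (closure (signCell A F q) ∩ Sg) = Submodule.span ℝ Sg := by
    refine le_antisymm (Submodule.span_mono Set.inter_subset_right) ?_
    rw [hF.span_eq_of_isShardIn hA hH]
    exact le_span_of_mem_nhdsWithin (LinearMap.mem_ker.mpr hHx) hnhds
  refine ⟨closure (signCell A F q), ⟨hF.mem_regions_iff.mpr ⟨q, hq, rfl⟩, ?_, H, hH, ?_⟩, ?_⟩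
  · rw [setDim, setDim, hspan]
  · rw [hF.sep_eq hA hq]
    exact hHq
  · rw [hF.sep_eq hA hq]
    exact hqp

end Main

end ShardPaper

open ShardPaper

theorem statement_1_general {V : Type*} [NormedAddCommGroup V] [InnerProductSpace ℝ V]
    [FiniteDimensional ℝ V]
    (A : Set (Set V)) (B : Set V)
    (hA : IsCentralArrangement A) (hB : B ∈ Regions A)
    (Sg R H J : Set V)
    (hlow : IsLowerShard A B Sg R)
    (hH : IsShardIn A B H Sg)
    (hJ : IsJ A B Sg J) :
    regLE A B J R ∧ H ∈ Sep A B J ∧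
      ∀ Q, regLE A B Q R → H ∈ Sep A B Q → regLE A B J Q := by
  obtain ⟨b, hb, hBb⟩ := hB
  obtain ⟨F, hF⟩ := exists_isOrientedNormals hA.2 hb
  have hBF : B = closure (signCell A F b) := by
    rw [hBb, hF.connectedComponentIn_eq fun K hK => (hF K hK).2.ne']
  refine ⟨hJ.2 R hlow.2, hF.mem_sep_of_isUpperRegion hA.1 hJ.1 hH, fun Q hQR hHQ => ?_⟩
  obtain ⟨Q₀, hQ₀, hQ₀Q⟩ := hF.exists_isUpperRegion_sep_subset hA.1 hBF hlow.2 hH hQR hHQ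
  obtain ⟨hJreg, -, hJQ₀⟩ := hJ.2 Q₀ hQ₀
  exact ⟨hJreg, hQR.1, hJQ₀.trans hQ₀Q⟩

/-- Lemma (J Sig char).  If `Σ` is a lower shard of `R`, then `J(Σ)` is
the unique minimal element of the poset of regions among regions `Q ≤ R` with
`H(Σ) ∈ S(Q)`. -/
theorem statement_1 {V : Type*} [NormedAddCommGroup V] [InnerProductSpace ℝ V]
    [FiniteDimensional ℝ V]
    (A : Set (Set V)) (B : Set V)
    (hA : IsCentralArrangement A) (hsimp : Simplicial A) (hB : B ∈ Regions A)
    (Sg R H J : Set V)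
    (hlow : IsLowerShard A B Sg R)
    (hH : IsShardIn A B H Sg)
    (hJ : IsJ A B Sg J) :
    regLE A B J R ∧ H ∈ Sep A B J ∧
      ∀ Q, regLE A B Q R → H ∈ Sep A B Q → regLE A B J Q :=
  statement_1_general A B hA hB Sg R H J hlow hH hJ
end
end
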